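/- Explicit minimizer of the binary score sum over the weight sphere: let n' ≥ 1, ζ ∈ {0,1}^{n'}, Q > 0, m = Σ_i ζ_i, and assume 0 < m < n'. Define w'* = 1_{n'} − (Q / √(m − m²/n'))(ζ − (m/n') 1_{n'}). Then ‖w'* − 1_{n'}‖₂ = Q, Σ_i w'*_i = n', and ζ·w'* = m − Q √(m − m²/n'). -/

import Mathlib

/-!
Write `v = ζ - (m/n') 1` for the centred vector, so that `w'* = 1 - c v` with `c = Q / √s` and
`s = m - m²/n'`. Since `v ⊥ 1`, we get `⟪ζ, v⟫ = ‖v‖² = ‖ζ‖² - m²/n'`, and `‖ζ‖² = m` because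
`ζ` is a 0/1 vector; hence `‖v‖² = ⟪ζ, v⟫ = s`. The three claims are then
`‖w'* - 1‖ = c √s = Q`, `⟪1, w'*⟫ = ‖1‖² - c ⟪1, v⟫ = n'` and `⟪ζ, w'*⟫ = m - c s = m - Q √s`.
-/

/-- The all-ones vector in `ℝ^n` (as a Euclidean space). -/
noncomputable def onesVec (n : ℕ) : EuclideanSpace ℝ (Fin n) := WithLp.toLp 2 (fun _ => (1 : ℝ))

open RealInnerProductSpace

noncomputable def centered {n : ℕ} (x : EuclideanSpace ℝ (Fin n)) : EuclideanSpace ℝ (Fin n) :=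
  x - ((∑ i, x i) / n) • onesVec n

section

variable {n : ℕ}

@[simp]
theorem onesVec_apply (i : Fin n) : onesVec n i = 1 := rfl

theorem real_inner_eq_sum_mul (x y : EuclideanSpace ℝ (Fin n)) : ⟪x, y⟫ = ∑ i, x i * y i := by
  simp [PiLp.inner_apply, mul_comm]

theorem inner_onesVec_left (x : EuclideanSpace ℝ (Fin n)) : ⟪onesVec n, x⟫ = ∑ i, x i := by
  simp [real_inner_eq_sum_mul]

theorem norm_onesVec_sq : ‖onesVec n‖ ^ 2 = n := by
  rw [← real_inner_self_eq_norm_sq, inner_onesVec_left]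
  simp

theorem inner_onesVec_centered (hn : n ≠ 0) (x : EuclideanSpace ℝ (Fin n)) :
    ⟪onesVec n, centered x⟫ = 0 := by
  rw [centered, inner_sub_right, real_inner_smul_right, real_inner_self_eq_norm_sq,
    norm_onesVec_sq, inner_onesVec_left, div_mul_cancel₀ _ (Nat.cast_ne_zero.mpr hn), sub_self]

theorem norm_centered_sq (hn : n ≠ 0) (x : EuclideanSpace ℝ (Fin n)) :
    ‖centered x‖ ^ 2 = ⟪x, centered x⟫ := by
  rw [← real_inner_self_eq_norm_sq]
  conv_lhs => rw [centered]
  rw [inner_sub_left, real_inner_smul_left, ← centered, inner_onesVec_centered hn, mul_zero,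
    sub_zero]

theorem inner_centered (x : EuclideanSpace ℝ (Fin n)) :
    ⟪x, centered x⟫ = ‖x‖ ^ 2 - (∑ i, x i) ^ 2 / n := by
  rw [centered, inner_sub_right, real_inner_smul_right, real_inner_self_eq_norm_sq,
    real_inner_comm, inner_onesVec_left]
  ring

theorem norm_sq_eq_sum_of_binary {x : EuclideanSpace ℝ (Fin n)} (hx : ∀ i, x i = 0 ∨ x i = 1) :
    ‖x‖ ^ 2 = ∑ i, x i := by
  rw [← real_inner_self_eq_norm_sq, real_inner_eq_sum_mul]
  refine Finset.sum_congr rfl fun i _ => ?_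
  rcases hx i with h | h <;> simp [h]

end

theorem sub_sq_div_pos {m n : ℝ} (hm : 0 < m) (hmn : m < n) : 0 < m - m ^ 2 / n := by
  have hn : 0 < n := hm.trans hmn
  rw [sub_pos, div_lt_iff₀ hn]
  nlinarith

theorem binary_score_min_explicit_minimizer_general {n' : ℕ}
    (ζ : EuclideanSpace ℝ (Fin n')) (hζ : ∀ i, ζ i = 0 ∨ ζ i = 1)
    (Q : ℝ) (hQ : 0 < Q) (m : ℝ) (hm : m = ∑ i, ζ i)
    (hm0 : 0 < m) (hmn : m < (n' : ℝ))
    (wstar : EuclideanSpace ℝ (Fin n'))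
    (hwstar : wstar = onesVec n'
      - (Q / Real.sqrt (m - m ^ 2 / (n' : ℝ))) • (ζ - (m / (n' : ℝ)) • onesVec n')) :
    ‖wstar - onesVec n'‖ = Q ∧
    (∑ i, wstar i) = (n' : ℝ) ∧
    (∑ i, ζ i * wstar i) = m - Q * Real.sqrt (m - m ^ 2 / (n' : ℝ)) := by
  have hn : n' ≠ 0 := by rintro rfl; simp at hmn; linarith
  set s := m - m ^ 2 / (n' : ℝ)
  have hs : 0 < s := sub_sq_div_pos hm0 hmn
  have hv_sq : ‖centered ζ‖ ^ 2 = s := by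
    rw [norm_centered_sq hn, inner_centered, norm_sq_eq_sum_of_binary hζ, ← hm]
  have hζv : ⟪ζ, centered ζ⟫ = s := by rw [← norm_centered_sq hn, hv_sq]
  have hv : ‖centered ζ‖ = √s := by rw [← hv_sq, Real.sqrt_sq (norm_nonneg _)]
  have hw : wstar = onesVec n' - (Q / √s) • centered ζ := by rw [hwstar, centered, ← hm]
  refine ⟨?_, ?_, ?_⟩
  · rw [hw, sub_sub_cancel_left, norm_neg, norm_smul, hv, Real.norm_of_nonneg (by positivity),
      div_mul_cancel₀ _ (Real.sqrt_pos.mpr hs).ne']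
  · rw [← inner_onesVec_left, hw, inner_sub_right, real_inner_smul_right,
      inner_onesVec_centered hn, real_inner_self_eq_norm_sq, norm_onesVec_sq, mul_zero, sub_zero]
  · rw [← real_inner_eq_sum_mul, hw, inner_sub_right, real_inner_smul_right, hζv,
      real_inner_comm, inner_onesVec_left, ← hm, div_mul_eq_mul_div,
      mul_div_assoc, Real.div_sqrt]

/-- explicit minimizer of the binary score sum over the weight
sphere: for `n' ≥ 1`, `ζ ∈ {0,1}^{n'}`, `Q > 0`, `m = Σ_i ζ_i` with
`0 < m < n'`, the vector `w'* = 1 − (Q/√(m − m²/n'))(ζ − (m/n')1)` satisfies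
`‖w'* − 1‖₂ = Q`, `Σ_i w'*_i = n'`, and `ζ·w'* = m − Q √(m − m²/n')`. -/
theorem binary_score_min_explicit_minimizer {n' : ℕ} (hn : 1 ≤ n')
    (ζ : EuclideanSpace ℝ (Fin n')) (hζ : ∀ i, ζ i = 0 ∨ ζ i = 1)
    (Q : ℝ) (hQ : 0 < Q) (m : ℝ) (hm : m = ∑ i, ζ i)
    (hm0 : 0 < m) (hmn : m < (n' : ℝ))
    (wstar : EuclideanSpace ℝ (Fin n'))
    (hwstar : wstar = onesVec n'
      - (Q / Real.sqrt (m - m ^ 2 / (n' : ℝ))) • (ζ - (m / (n' : ℝ)) • onesVec n')) :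
    ‖wstar - onesVec n'‖ = Q ∧
    (∑ i, wstar i) = (n' : ℝ) ∧
    (∑ i, ζ i * wstar i) = m - Q * Real.sqrt (m - m ^ 2 / (n' : ℝ)) :=
  binary_score_min_explicit_minimizer_general ζ hζ Q hQ m hm hm0 hmn wstar hwstar
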